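/- arXiv:2604.01026 — 2 statements merged into one kernel-verified Lean document; each statement's English description precedes it below -/
import Mathlib

section
/- For skew-adjoint matrices A_1, A_2 and h ≥ 0, the Strang splitting satisfies ‖e^{h(A_1+A_2)} − e^{(h/2)A_1} e^{hA_2} e^{(h/2)A_1}‖ ≤ (h³/12)‖[A_2,[A_1,A_2]]‖ + (h³/24)‖[A_1,[A_1,A_2]]‖. -/
open scoped Matrix Matrix.Norms.L2Operator
open NormedSpace

/-!
Variation of constants: if `S 0 = 1` and `S' = (L + R) S` with `L` skew-adjoint, then
`e^{-tL} S(t) - 1` has derivative `e^{-tL} R(t) S(t)`, of norm `‖R(t)‖` when `S` is unitary, so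
`‖e^{tL} - S(t)‖ ≤ ∫₀ᵗ ‖R‖`. For the Strang product `S(t) = e^{ta} e^{tb} e^{ta}` and
`L = 2a + b`, the defect `R(t)` is a sum of conjugates of two second-order Taylor remainders of
`s ↦ e^{sM} X e^{-sM}`, for `(M, X) = (b, a)` and `(a, b)`. As conjugation by a unitary is an
isometry, each remainder is at most `(t²/2) ‖[M, [M, X]]‖`, and integrating gives `t³/6`;
taking `a = A/2` yields the constants `1/12` and `1/24`.
-/

theorem norm_image_le_of_norm_deriv_le_mul_pow {E : Type*} [NormedAddCommGroup E]
    [NormedSpace ℝ E] {f f' : ℝ → E} {c t : ℝ} (k : ℕ)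
    (hf : ∀ r ∈ Set.Icc 0 t, HasDerivAt f (f' r) r) (h0 : f 0 = 0)
    (hf' : ∀ r ∈ Set.Ico 0 t, ‖f' r‖ ≤ c * r ^ k) (ht : 0 ≤ t) :
    ‖f t‖ ≤ c * t ^ (k + 1) / (k + 1) := by
  have hB (r : ℝ) : HasDerivAt (fun r => c * r ^ (k + 1) / (k + 1)) (c * r ^ k) r := by
    refine (((hasDerivAt_pow (k + 1) r).const_mul c).div_const ((k : ℝ) + 1)).congr_deriv ?_
    rw [Nat.add_sub_cancel, Nat.cast_add_one]
    field_simp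
  exact image_norm_le_of_norm_deriv_right_le_deriv_boundary
    (fun r hr => (hf r hr).continuousAt.continuousWithinAt)
    (fun r hr => (hf r (Set.Ico_subset_Icc_self hr)).hasDerivWithinAt) (by simp [h0]) hB hf'
    ⟨ht, le_rfl⟩

section BanachAlgebra

variable {𝔸 : Type*} [NormedRing 𝔸] [NormedAlgebra ℝ 𝔸] (M X Y a b : 𝔸) (t : ℝ)

noncomputable def conjExp (M X : 𝔸) (t : ℝ) : 𝔸 := exp (t • M) * X * exp (t • -M)

theorem conjExp_zero : conjExp M X 0 = X := by simp [conjExp]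

theorem conjExp_sub : conjExp M (X - Y) t = conjExp M X t - conjExp M Y t := by
  simp only [conjExp, mul_sub, sub_mul]

theorem conjExp_neg : conjExp M (-X) t = -conjExp M X t := by
  simp only [conjExp, mul_neg, neg_mul]

theorem conjExp_smul (s : ℝ) : conjExp M (s • X) t = s • conjExp M X t := by
  simp only [conjExp, mul_smul_comm, smul_mul_assoc]

noncomputable def strang (a b : 𝔸) (t : ℝ) : 𝔸 := exp (t • a) * exp (t • b) * exp (t • a)

noncomputable def strangDefect (a b : 𝔸) (t : ℝ) : 𝔸 :=
  (conjExp a (conjExp b a t) t - a) + (conjExp a b t - b)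

variable [CompleteSpace 𝔸]

theorem exp_smul_mul_exp_smul_neg : exp (t • M) * exp (t • -M) = 1 := by
  -- the algebraic laws of `NormedSpace.exp` are stated for normed `ℚ`-algebras
  let := NormedAlgebra.restrictScalars ℚ ℝ 𝔸
  rw [smul_neg, ← exp_add_of_commute ((Commute.refl M).smul_left t |>.smul_right t |>.neg_right),
    add_neg_cancel, exp_zero]

theorem exp_smul_neg_mul_exp_smul : exp (t • -M) * exp (t • M) = 1 := by
  simpa using exp_smul_mul_exp_smul_neg (-M) t

theorem conjExp_self : conjExp M M t = M := by
  rw [conjExp, ← ((Commute.refl M).smul_right t).exp_right.eq, mul_assoc,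
    exp_smul_mul_exp_smul_neg, mul_one]

theorem hasDerivAt_conjExp : HasDerivAt (conjExp M X) (conjExp M ⁅M, X⁆ t) t := by
  refine (((hasDerivAt_exp_smul_const' M t).mul_const X).mul
    (hasDerivAt_exp_smul_const' (-M) t)).congr_deriv ?_
  rw [conjExp, Ring.lie_def, ((Commute.refl M).smul_right t).exp_right.eq]
  noncomm_ring

theorem hasDerivAt_strang :
    HasDerivAt (strang a b) ((a + a + b + strangDefect a b t) * strang a b t) t := by
  have hU := hasDerivAt_exp_smul_const' a t
  refine ((hU.mul (hasDerivAt_exp_smul_const' b t)).mul hU).congr_deriv ?_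
  have cancel (M z : 𝔸) : exp (t • -M) * (exp (t • M) * z) = z := by
    rw [← mul_assoc, exp_smul_neg_mul_exp_smul, one_mul]
  simp only [strang, strangDefect, conjExp, Pi.mul_apply, add_mul, sub_mul, mul_assoc, cancel]
  abel

theorem strangDefect_eq : strangDefect a b t =
    conjExp a (conjExp b a t - a - t • ⁅b, a⁆) t +
      (conjExp a b t - b - t • conjExp a ⁅a, b⁆ t) := by
  have hba : ⁅b, a⁆ = -⁅a, b⁆ := by rw [Ring.lie_def, Ring.lie_def, neg_sub]
  rw [hba]
  simp only [strangDefect, conjExp_sub, conjExp_smul, conjExp_neg, smul_neg, conjExp_self]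
  abel

variable [StarRing 𝔸] [CStarRing 𝔸] [StarModule ℝ 𝔸]

theorem exp_smul_mem_unitary {M : 𝔸} (hM : M ∈ skewAdjoint 𝔸) (t : ℝ) :
    exp (t • M) ∈ unitary 𝔸 := by
  let := NormedAlgebra.restrictScalars ℚ ℝ 𝔸
  exact exp_mem_unitary_of_mem_skewAdjoint (skewAdjoint.smul_mem t hM)

theorem norm_conjExp {M : 𝔸} (hM : M ∈ skewAdjoint 𝔸) (X : 𝔸) (t : ℝ) :
    ‖conjExp M X t‖ = ‖X‖ := by
  rw [conjExp, CStarRing.norm_mul_mem_unitary _ (exp_smul_mem_unitary (neg_mem hM) t),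
    CStarRing.norm_mem_unitary_mul _ (exp_smul_mem_unitary hM t)]

theorem norm_conjExp_sub_le {M : 𝔸} (hM : M ∈ skewAdjoint 𝔸) (X : 𝔸) {t : ℝ} (ht : 0 ≤ t) :
    ‖conjExp M X t - X‖ ≤ ‖⁅M, X⁆‖ * t := by
  simpa using norm_image_le_of_norm_deriv_le_mul_pow 0
    (fun r _ => (hasDerivAt_conjExp M X r).sub_const X) (by rw [conjExp_zero, sub_self])
    (fun r _ => by rw [norm_conjExp hM, pow_zero, mul_one]) ht

theorem norm_conjExp_sub_sub_le {M : 𝔸} (hM : M ∈ skewAdjoint 𝔸) (X : 𝔸) {t : ℝ}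
    (ht : 0 ≤ t) : ‖conjExp M X t - X - t • ⁅M, X⁆‖ ≤ ‖⁅M, ⁅M, X⁆⁆‖ * t ^ 2 / 2 := by
  have hf (r : ℝ) : HasDerivAt (fun s => conjExp M X s - X - s • ⁅M, X⁆)
      (conjExp M ⁅M, X⁆ r - ⁅M, X⁆) r := by
    refine (((hasDerivAt_conjExp M X r).sub_const X).sub
      ((hasDerivAt_id r).smul_const ⁅M, X⁆)).congr_deriv ?_
    rw [one_smul]
  have := norm_image_le_of_norm_deriv_le_mul_pow 1 (fun r _ => hf r) (by simp [conjExp_zero])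
    (fun r hr => by simpa using norm_conjExp_sub_le hM ⁅M, X⁆ hr.1) ht
  simpa [one_add_one_eq_two] using this

theorem norm_conjExp_sub_sub_conjExp_le {M : 𝔸} (hM : M ∈ skewAdjoint 𝔸) (X : 𝔸) {t : ℝ}
    (ht : 0 ≤ t) :
    ‖conjExp M X t - X - t • conjExp M ⁅M, X⁆ t‖ ≤ ‖⁅M, ⁅M, X⁆⁆‖ * t ^ 2 / 2 := by
  have hf (r : ℝ) : HasDerivAt (fun s => conjExp M X s - X - s • conjExp M ⁅M, X⁆ s)
      (-(r • conjExp M ⁅M, ⁅M, X⁆⁆ r)) r := by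
    refine (((hasDerivAt_conjExp M X r).sub_const X).sub
      ((hasDerivAt_id r).smul (hasDerivAt_conjExp M ⁅M, X⁆ r))).congr_deriv ?_
    simp only [id, one_smul]
    abel
  have := norm_image_le_of_norm_deriv_le_mul_pow 1 (fun r _ => hf r) (by simp [conjExp_zero])
    (fun r hr => by rw [norm_neg, norm_smul, norm_conjExp hM, Real.norm_of_nonneg hr.1,
      pow_one, mul_comm]) ht
  simpa [one_add_one_eq_two] using this

theorem norm_exp_smul_sub_le_of_norm_deriv_sub_mul_le {L : 𝔸} (hL : L ∈ skewAdjoint 𝔸)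
    {S S' : ℝ → 𝔸} {c t : ℝ} (k : ℕ) (hS : ∀ r ∈ Set.Icc 0 t, HasDerivAt S (S' r) r)
    (h0 : S 0 = 1) (hS' : ∀ r ∈ Set.Ico 0 t, ‖S' r - L * S r‖ ≤ c * r ^ k) (ht : 0 ≤ t) :
    ‖exp (t • L) - S t‖ ≤ c * t ^ (k + 1) / (k + 1) := by
  have hf (r : ℝ) (hr : r ∈ Set.Icc 0 t) : HasDerivAt (fun s => exp (s • -L) * S s - 1)
      (exp (r • -L) * (S' r - L * S r)) r := by
    refine (((hasDerivAt_exp_smul_const' (-L) r).mul (hS r hr)).sub_const 1).congr_deriv ?_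
    rw [((Commute.refl (-L)).smul_right r).exp_right.eq]
    noncomm_ring
  have hunit (r : ℝ) := exp_smul_mem_unitary (neg_mem hL) r
  calc ‖exp (t • L) - S t‖ = ‖exp (t • -L) * S t - 1‖ := by
        rw [← CStarRing.norm_mem_unitary_mul _ (hunit t), mul_sub, exp_smul_neg_mul_exp_smul,
          norm_sub_rev]
    _ ≤ c * t ^ (k + 1) / (k + 1) :=
        norm_image_le_of_norm_deriv_le_mul_pow k hf (by simp [h0])
          (fun r hr => by rw [CStarRing.norm_mem_unitary_mul _ (hunit r)]; exact hS' r hr) ht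

theorem strang_mem_unitary {a b : 𝔸} (ha : a ∈ skewAdjoint 𝔸) (hb : b ∈ skewAdjoint 𝔸)
    (t : ℝ) : strang a b t ∈ unitary 𝔸 :=
  mul_mem (mul_mem (exp_smul_mem_unitary ha t) (exp_smul_mem_unitary hb t))
    (exp_smul_mem_unitary ha t)

theorem norm_strangDefect_le {a b : 𝔸} (ha : a ∈ skewAdjoint 𝔸) (hb : b ∈ skewAdjoint 𝔸)
    {t : ℝ} (ht : 0 ≤ t) :
    ‖strangDefect a b t‖ ≤ (‖⁅b, ⁅b, a⁆⁆‖ + ‖⁅a, ⁅a, b⁆⁆‖) * t ^ 2 / 2 := by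
  rw [strangDefect_eq]
  calc _ ≤ ‖conjExp b a t - a - t • ⁅b, a⁆‖ + ‖conjExp a b t - b - t • conjExp a ⁅a, b⁆ t‖ := by
        rw [← norm_conjExp ha (conjExp b a t - a - t • ⁅b, a⁆) t]
        exact norm_add_le _ _
    _ ≤ ‖⁅b, ⁅b, a⁆⁆‖ * t ^ 2 / 2 + ‖⁅a, ⁅a, b⁆⁆‖ * t ^ 2 / 2 :=
        add_le_add (norm_conjExp_sub_sub_le hb a ht) (norm_conjExp_sub_sub_conjExp_le ha b ht)
    _ = _ := by ring

theorem norm_exp_sub_strang_le {a b : 𝔸} (ha : a ∈ skewAdjoint 𝔸) (hb : b ∈ skewAdjoint 𝔸)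
    {t : ℝ} (ht : 0 ≤ t) :
    ‖exp (t • (a + a + b)) - strang a b t‖ ≤ (‖⁅b, ⁅b, a⁆⁆‖ + ‖⁅a, ⁅a, b⁆⁆‖) * t ^ 3 / 6 := by
  have := norm_exp_smul_sub_le_of_norm_deriv_sub_mul_le (add_mem (add_mem ha ha) hb) 2
    (c := (‖⁅b, ⁅b, a⁆⁆‖ + ‖⁅a, ⁅a, b⁆⁆‖) / 2) (fun r _ => hasDerivAt_strang a b r)
    (by simp [strang])
    (fun r hr => by
      rw [add_mul _ (strangDefect a b r), add_sub_cancel_left,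
        CStarRing.norm_mul_mem_unitary _ (strang_mem_unitary ha hb r)]
      exact (norm_strangDefect_le ha hb hr.1).trans_eq (by ring)) ht
  convert this using 1
  push_cast
  ring

theorem norm_exp_add_sub_strang_le {A B : 𝔸} (hA : A ∈ skewAdjoint 𝔸)
    (hB : B ∈ skewAdjoint 𝔸) {t : ℝ} (ht : 0 ≤ t) :
    ‖exp (t • (A + B)) - exp ((t / 2) • A) * exp (t • B) * exp ((t / 2) • A)‖ ≤
      t ^ 3 / 12 * ‖⁅B, ⁅A, B⁆⁆‖ + t ^ 3 / 24 * ‖⁅A, ⁅A, B⁆⁆‖ := by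
  have key := norm_exp_sub_strang_le (skewAdjoint.smul_mem (2⁻¹ : ℝ) hA) hB ht
  have hsplit : (2⁻¹ : ℝ) • A + (2⁻¹ : ℝ) • A = A := by rw [← add_smul]; norm_num
  have hhalf : t • (2⁻¹ : ℝ) • A = (t / 2) • A := by rw [smul_smul, div_eq_mul_inv]
  have hBBA : ⁅B, ⁅B, (2⁻¹ : ℝ) • A⁆⁆ = -(2⁻¹ : ℝ) • ⁅B, ⁅A, B⁆⁆ := by
    simp only [Ring.lie_def, smul_mul_assoc, mul_smul_comm, neg_smul, ← smul_sub]
    rw [← smul_neg]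
    congr 1
    noncomm_ring
  have hAAB : ⁅(2⁻¹ : ℝ) • A, ⁅(2⁻¹ : ℝ) • A, B⁆⁆ = (4⁻¹ : ℝ) • ⁅A, ⁅A, B⁆⁆ := by
    simp only [Ring.lie_def, smul_mul_assoc, mul_smul_comm, smul_smul, ← smul_sub]
    norm_num
  rw [hsplit, strang, hhalf, hBBA, hAAB, norm_smul, norm_smul] at key
  convert key using 1
  norm_num
  ring

end BanachAlgebra

/-- Optimal commutator bound for the Strang splitting with two
skew-adjoint operators. -/
theorem strang_splitting_commutator_bound {n : ℕ}
    (A₁ A₂ : Matrix (Fin n) (Fin n) ℂ)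
    (h1 : A₁ᴴ = -A₁) (h2 : A₂ᴴ = -A₂) (h : ℝ) (hh : 0 ≤ h) :
    ‖exp (h • (A₁ + A₂)) -
        exp ((h / 2) • A₁) * exp (h • A₂) * exp ((h / 2) • A₁)‖ ≤
      h ^ 3 / 12 * ‖A₂ * (A₁ * A₂ - A₂ * A₁) - (A₁ * A₂ - A₂ * A₁) * A₂‖ +
        h ^ 3 / 24 * ‖A₁ * (A₁ * A₂ - A₂ * A₁) - (A₁ * A₂ - A₂ * A₁) * A₁‖ := by
  simpa only [Ring.lie_def] using
    norm_exp_add_sub_strang_le (skewAdjoint.mem_iff.2 h1) (skewAdjoint.mem_iff.2 h2) hh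
end

section
/- Let A_1, ..., A_N be skew-adjoint matrices with ‖A_j‖ = a_j. If Ψ(h) = χ(α_1h)χ*(α_2h)···χ(α_2h)χ*(α_1h) is a time-symmetric 2s-stage composition of even order p (with palindromic coefficients α_{2s+1−j} = α_j), where χ(h) = e^{hA_1}···e^{hA_N} and χ*(h) = e^{hA_N}···e^{hA_1}, then ‖Ψ(h) − e^{hΣA_j}‖ ≤ (2^{−p}/(p+1)!)(1 + 2Σ_{i=1}^{s}|α_i|)^{p+1} (h Σ_j a_j)^{p+1} for all h ≥ 0. -/
/-!
Let `Φ(t)` be the product of the first `s` stages of `Ψ(t)`. Palindromy makes the last `s`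
stages at `t` the inverse of `Φ(-t)`, so `Ψ(t) = Φ(-t)⁻¹ Φ(t)`. With the unitary half flow
`e(t) = exp(-tX/2)`, `X = ∑ Aᵢ`, and `w(t) = Φ(t) e(t)` this gives
`w(t) - w(-t) = Φ(-t) (Ψ(t) - exp(tX)) e(t)`: the local error has the norm of the odd function
`w(t) - w(-t)`, whose derivatives at `0` vanish up to order `p`. All factors are products of unitary
exponentials, so `‖w⁽ᵐ⁾‖ ≤ (cS + S/2)ᵐ` with `c = ∑ |αᵢ|`, `S = ∑ aⱼ`, and Taylor's theorem bounds
`‖w(h) - w(-h)‖` by `2 (cS + S/2)ᵖ⁺¹ hᵖ⁺¹ / (p+1)!`, which is the claim.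
-/

open scoped Matrix Matrix.Norms.L2Operator
open NormedSpace
open scoped ContDiff Nat

section Taylor

variable {F : Type*} [NormedAddCommGroup F] [NormedSpace ℝ F]

theorem norm_le_of_norm_deriv_le_pow {f : ℝ → F} (hf : Differentiable ℝ f) (hf0 : f 0 = 0)
    {C : ℝ} {k : ℕ} (hf' : ∀ y, 0 ≤ y → ‖deriv f y‖ ≤ C * y ^ k / k !) {x : ℝ} (hx : 0 ≤ x) :
    ‖f x‖ ≤ C * x ^ (k + 1) / (k + 1)! := by
  have hB (y : ℝ) : HasDerivAt (fun y => C * y ^ (k + 1) / (k + 1)!) (C * y ^ k / k !) y := by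
    refine (((hasDerivAt_pow (k + 1) y).const_mul C).div_const ((k + 1)! : ℝ)).congr_deriv ?_
    rw [Nat.add_sub_cancel, Nat.factorial_succ]
    push_cast
    field_simp
  exact image_norm_le_of_norm_deriv_right_le_deriv_boundary hf.continuous.continuousOn
    (fun y _ => (hf y).hasDerivAt.hasDerivWithinAt) (by simp [hf0]) hB
    (fun y hy => hf' y hy.1) ⟨hx, le_rfl⟩

theorem norm_le_of_iteratedDeriv_eq_zero {p : ℕ} {f : ℝ → F} (hf : ContDiff ℝ (p + 1) f)
    (hf0 : ∀ k ≤ p, iteratedDeriv k f 0 = 0) {C : ℝ}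
    (hC : ∀ t, ‖iteratedDeriv (p + 1) f t‖ ≤ C) {x : ℝ} (hx : 0 ≤ x) :
    ‖f x‖ ≤ C * x ^ (p + 1) / (p + 1)! := by
  induction p generalizing f x with
  | zero =>
    refine norm_le_of_norm_deriv_le_pow (hf.differentiable (by simp)) (by simpa using hf0 0 le_rfl)
      (fun y _ => ?_) hx
    simpa [← iteratedDeriv_one] using hC y
  | succ p ih =>
    obtain ⟨hdiff, -, hf'⟩ := contDiff_succ_iff_deriv.mp hf
    refine norm_le_of_norm_deriv_le_pow hdiff (by simpa using hf0 0 (Nat.zero_le _))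
      (fun y hy => ih (by exact_mod_cast hf') (fun k hk => ?_) (fun t => ?_) hy) hx
    · rw [← iteratedDeriv_succ']; exact hf0 (k + 1) (by omega)
    · rw [← iteratedDeriv_succ']; exact hC t

end Taylor

section DescProd

variable {M : Type*} [Monoid M]

def descProd (B : ℕ → M) : ℕ → M
  | 0 => 1
  | m + 1 => B (m + 1) * descProd B m

@[simp]
theorem descProd_zero (B : ℕ → M) : descProd B 0 = 1 := rfl

@[simp]
theorem descProd_succ (B : ℕ → M) (m : ℕ) : descProd B (m + 1) = B (m + 1) * descProd B m := rfl

theorem descProd_add (B : ℕ → M) (m k : ℕ) :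
    descProd B (m + k) = descProd (fun j => B (j + k)) m * descProd B k := by
  induction m with
  | zero => simp
  | succ m ih =>
    rw [Nat.add_right_comm, descProd_succ, ih, descProd_succ, mul_assoc, Nat.add_right_comm]

theorem descProd_mul_descProd_eq_one {G H : ℕ → M} {m : ℕ}
    (h : ∀ j ∈ Finset.Icc 1 m, G j * H (m + 1 - j) = 1) : descProd G m * descProd H m = 1 := by
  induction m generalizing G with
  | zero => simp
  | succ m ih =>
    have hinner : G 1 * H (m + 1) = 1 := by simpa using h 1 (by simp)
    have houter : descProd (fun j => G (j + 1)) m * descProd H m = 1 :=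
      ih fun j hj => by
        have := h (j + 1) (by simp at hj ⊢; omega)
        rwa [show m + 1 + 1 - (j + 1) = m + 1 - j by omega] at this
    calc descProd G (m + 1) * descProd H (m + 1)
        = descProd (fun j => G (j + 1)) m * (G 1 * H (m + 1)) * descProd H m := by
          rw [descProd_add G m 1, descProd_succ H]; simp [mul_assoc]
      _ = 1 := by rw [hinner, mul_one, houter]

theorem descProd_mem {S : Submonoid M} {B : ℕ → M} (h : ∀ j, B j ∈ S) (m : ℕ) :
    descProd B m ∈ S := by
  induction m with
  | zero => exact S.one_mem
  | succ m ih => exact S.mul_mem (h _) ih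

theorem reverse_prod_ofFn_pairs_eq_descProd (B : ℕ → M) (s : ℕ) :
    (List.ofFn fun k : Fin s => B (2 * k + 2) * B (2 * k + 1)).reverse.prod =
      descProd B (2 * s) := by
  induction s with
  | zero => simp
  | succ s ih =>
    rw [List.ofFn_succ', List.concat_eq_append, List.reverse_append, List.prod_append]
    simp only [Fin.val_last, Fin.val_castSucc, ih, List.reverse_singleton, List.prod_singleton]
    rw [show 2 * (s + 1) = 2 * s + 1 + 1 by ring, descProd_succ, descProd_succ, mul_assoc]

theorem List.prod_map_mul_reverse_prod_map_eq_one {ι : Type*} (l : List ι) {f g : ι → M}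
    (h : ∀ i, f i * g i = 1) : (l.map f).prod * (l.map g).reverse.prod = 1 := by
  induction l with
  | nil => simp
  | cons i l ih =>
    simp only [List.map_cons, List.prod_cons, List.reverse_cons, List.prod_append,
      List.prod_nil, mul_one]
    rw [mul_assoc, ← mul_assoc (l.map f).prod, ih, one_mul, h]

theorem List.reverse_prod_map_mul_prod_map_eq_one {ι : Type*} (l : List ι) {f g : ι → M}
    (h : ∀ i, f i * g i = 1) : (l.map f).reverse.prod * (l.map g).prod = 1 := by
  simpa [List.map_reverse] using l.reverse.prod_map_mul_reverse_prod_map_eq_one h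

end DescProd

section GeomDerivBound

variable {F : Type*} [NormedAddCommGroup F] [NormedSpace ℝ F]

def HasGeomDerivBound (S : ℝ) (f : ℝ → F) : Prop :=
  ContDiff ℝ ∞ f ∧ ∀ (m : ℕ) (t : ℝ), ‖iteratedDeriv m f t‖ ≤ S ^ m

namespace HasGeomDerivBound

variable {S : ℝ} {f : ℝ → F}

theorem nonneg (hf : HasGeomDerivBound S f) : 0 ≤ S :=
  (norm_nonneg _).trans (by simpa using hf.2 1 0)

theorem comp_mul (hf : HasGeomDerivBound S f) (r : ℝ) :
    HasGeomDerivBound (|r| * S) (fun t => f (r * t)) := by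
  refine ⟨hf.1.comp (contDiff_const.mul contDiff_id), fun m t => ?_⟩
  rw [iteratedDeriv_comp_const_smul (hf.1.of_le (by exact_mod_cast le_top)), norm_smul, norm_pow,
    Real.norm_eq_abs, mul_pow]
  gcongr
  exact hf.2 m _

theorem norm_iteratedDeriv_sub_comp_neg_le (hf : HasGeomDerivBound S f) (m : ℕ) (t : ℝ) :
    ‖iteratedDeriv m (fun t => f t - f (-t)) t‖ ≤ 2 * S ^ m := by
  have hneg := hf.comp_mul (-1)
  simp only [abs_neg, abs_one, one_mul, neg_one_mul] at hneg
  rw [iteratedDeriv_fun_sub (hf.1.of_le (by exact_mod_cast le_top)).contDiffAt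
    (hneg.1.of_le (by exact_mod_cast le_top)).contDiffAt, two_mul]
  exact (norm_sub_le _ _).trans (add_le_add (hf.2 m t) (hneg.2 m t))

end HasGeomDerivBound

end GeomDerivBound

section NormedAlgebra

variable {E : Type*} [NormedRing E] [NormedAlgebra ℝ E]

theorem HasGeomDerivBound.mul {S T : ℝ} {f g : ℝ → E} (hf : HasGeomDerivBound S f)
    (hg : HasGeomDerivBound T g) : HasGeomDerivBound (S + T) (fun t => f t * g t) := by
  refine ⟨hf.1.mul hg.1, fun m t => ?_⟩
  rw [← norm_iteratedFDeriv_eq_norm_iteratedDeriv]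
  calc ‖iteratedFDeriv ℝ m (fun t => f t * g t) t‖
      ≤ ∑ i ∈ Finset.range (m + 1), (m.choose i : ℝ) * ‖iteratedFDeriv ℝ i f t‖ *
          ‖iteratedFDeriv ℝ (m - i) g t‖ :=
        norm_iteratedFDeriv_mul_le hf.1 hg.1 t (by exact_mod_cast le_top)
    _ ≤ ∑ i ∈ Finset.range (m + 1), (m.choose i : ℝ) * S ^ i * T ^ (m - i) := by
        have := hf.nonneg
        gcongr with i
        · rw [norm_iteratedFDeriv_eq_norm_iteratedDeriv]; exact hf.2 i t
        · rw [norm_iteratedFDeriv_eq_norm_iteratedDeriv]; exact hg.2 (m - i) t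
    _ = (S + T) ^ m := by
        rw [add_pow]
        exact Finset.sum_congr rfl fun i _ => by ring

theorem iteratedDeriv_mul_eq_zero_of_left {p : ℕ} {f g : ℝ → E} (hf : ContDiff ℝ p f)
    (hg : ContDiff ℝ p g) (hf0 : ∀ k ≤ p, iteratedDeriv k f 0 = 0) :
    ∀ k ≤ p, iteratedDeriv k (fun t => f t * g t) 0 = 0 := by
  intro k hk
  rw [← norm_le_zero_iff, ← norm_iteratedFDeriv_eq_norm_iteratedDeriv]
  refine (norm_iteratedFDeriv_mul_le hf hg 0 (by exact_mod_cast hk)).trans_eq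
    (Finset.sum_eq_zero fun i hi => ?_)
  rw [norm_iteratedFDeriv_eq_norm_iteratedDeriv,
    hf0 i (by have := Finset.mem_range.mp hi; omega), norm_zero, mul_zero, zero_mul]

theorem iteratedDeriv_mul_eq_zero_of_right {p : ℕ} {f g : ℝ → E} (hf : ContDiff ℝ p f)
    (hg : ContDiff ℝ p g) (hg0 : ∀ k ≤ p, iteratedDeriv k g 0 = 0) :
    ∀ k ≤ p, iteratedDeriv k (fun t => f t * g t) 0 = 0 := by
  intro k hk
  rw [← norm_le_zero_iff, ← norm_iteratedFDeriv_eq_norm_iteratedDeriv]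
  refine (norm_iteratedFDeriv_mul_le hf hg 0 (by exact_mod_cast hk)).trans_eq
    (Finset.sum_eq_zero fun i _ => ?_)
  rw [norm_iteratedFDeriv_eq_norm_iteratedDeriv (n := k - i), hg0 (k - i) (by omega), norm_zero,
    mul_zero]

variable [CompleteSpace E]

theorem iteratedDeriv_exp_smul (B : E) (m : ℕ) :
    iteratedDeriv m (fun t : ℝ => exp (t • B)) = fun t => exp (t • B) * B ^ m := by
  induction m with
  | zero => simp
  | succ m ih =>
    funext t
    rw [iteratedDeriv_succ, ih, pow_succ', ← mul_assoc]
    exact ((hasDerivAt_exp_smul_const B t).mul_const (B ^ m)).deriv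

theorem contDiff_exp_smul (B : E) : ContDiff ℝ ∞ (fun t : ℝ => exp (t • B)) := by
  have hdiff (m : ℕ) : Differentiable ℝ (iteratedDeriv m fun t : ℝ => exp (t • B)) := by
    rw [iteratedDeriv_exp_smul]
    exact fun t => ((hasDerivAt_exp_smul_const B t).mul_const (B ^ m)).differentiableAt
  exact contDiff_iff_iteratedDeriv.mpr ⟨fun m _ => (hdiff m).continuous, fun m _ => hdiff m⟩

theorem exp_smul_mul_exp_smul (B : E) (u v : ℝ) :
    exp (u • B) * exp (v • B) = exp ((u + v) • B) := by
  -- `exp` does not depend on this structure; Mathlib's lemmas about it ask for a normed ℚ-algebra.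
  let : NormedAlgebra ℚ E := NormedAlgebra.restrictScalars ℚ ℝ E
  rw [add_smul, exp_add_of_commute (((Commute.refl B).smul_left u).smul_right v)]

theorem sub_comp_neg_eq_mul_sub_exp_mul {Φ Ψ : ℝ → E} (hfac : ∀ t, Φ (-t) * Ψ t = Φ t) (X : E)
    (t : ℝ) :
    Φ t * exp ((-(1 / 2) * t) • X) - Φ (-t) * exp ((-(1 / 2) * -t) • X) =
      Φ (-t) * (Ψ t - exp (t • X)) * exp ((-(1 / 2) * t) • X) := by
  rw [mul_sub, sub_mul, hfac, mul_assoc (Φ (-t)), exp_smul_mul_exp_smul]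
  ring_nf

end NormedAlgebra

section CStarRing

variable {E : Type*} [NormedRing E] [StarRing E] [CStarRing E]

theorem CStarRing.norm_one_le : ‖(1 : E)‖ ≤ 1 := by
  cases subsingleton_or_nontrivial E
  · simp [Subsingleton.elim (1 : E) 0]
  · exact CStarRing.norm_one.le

variable [NormedAlgebra ℝ E]

theorem hasGeomDerivBound_one : HasGeomDerivBound 0 (fun _ : ℝ => (1 : E)) :=
  ⟨contDiff_const, fun m t => by
    rw [iteratedDeriv_const]
    split_ifs with hm <;> simp [hm, CStarRing.norm_one_le]⟩

theorem HasGeomDerivBound.list_prod {ι : Type*} (l : List ι) {f : ι → ℝ → E} {S : ι → ℝ}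
    (h : ∀ i ∈ l, HasGeomDerivBound (S i) (f i)) :
    HasGeomDerivBound (l.map S).sum (fun t => (l.map (f · t)).prod) := by
  induction l with
  | nil => simpa using hasGeomDerivBound_one
  | cons i l ih =>
    simp only [List.map_cons, List.sum_cons, List.prod_cons]
    exact (h i List.mem_cons_self).mul (ih fun j hj => h j (List.mem_cons_of_mem i hj))

theorem HasGeomDerivBound.descProd {B : ℕ → ℝ → E} {S : ℕ → ℝ}
    (h : ∀ j, HasGeomDerivBound (S j) (B j)) (m : ℕ) :
    HasGeomDerivBound (∑ j ∈ Finset.Icc 1 m, S j) (fun t => descProd (B · t) m) := by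
  induction m with
  | zero => simpa using hasGeomDerivBound_one
  | succ m ih =>
    rw [Finset.sum_Icc_succ_top (by omega), add_comm]
    exact (h (m + 1)).mul ih

variable [StarModule ℝ E]

theorem contDiff_of_neg_mul_eq {Φ Ψ : ℝ → E} (hΦ : ContDiff ℝ ∞ Φ) (hΦu : ∀ t, Φ t ∈ unitary E)
    (hfac : ∀ t, Φ (-t) * Ψ t = Φ t) : ContDiff ℝ ∞ Ψ := by
  have hΨ : Ψ = fun t => star (Φ (-t)) * Φ t := funext fun t => by
    rw [← hfac t, ← mul_assoc, Unitary.star_mul_self_of_mem (hΦu _), one_mul]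
  rw [hΨ]
  exact ((starL' ℝ : E ≃L[ℝ] E).contDiff.comp (hΦ.comp contDiff_neg)).mul hΦ

variable [CompleteSpace E]

theorem exp_smul_mem_unitary_s16 {B : E} (hB : star B = -B) (t : ℝ) : exp (t • B) ∈ unitary E := by
  let : NormedAlgebra ℚ E := NormedAlgebra.restrictScalars ℚ ℝ E
  refine exp_mem_unitary_of_mem_skewAdjoint ?_
  rw [skewAdjoint.mem_iff, star_smul, star_trivial, hB, smul_neg]

theorem hasGeomDerivBound_exp_smul {B : E} (hB : star B = -B) :
    HasGeomDerivBound ‖B‖ (fun t : ℝ => exp (t • B)) := by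
  refine ⟨contDiff_exp_smul B, fun m t => ?_⟩
  rw [iteratedDeriv_exp_smul, CStarRing.norm_mem_unitary_mul _ (exp_smul_mem_unitary_s16 hB t)]
  rcases m.eq_zero_or_pos with rfl | hm
  · simpa using CStarRing.norm_one_le
  · exact norm_pow_le' B hm

theorem norm_sub_exp_le_of_neg_mul_eq {Φ Ψ : ℝ → E} {X : E} {R : ℝ} {p : ℕ}
    (hX : star X = -X) (hΦ : HasGeomDerivBound R Φ) (hΦu : ∀ t, Φ t ∈ unitary E)
    (hfac : ∀ t, Φ (-t) * Ψ t = Φ t)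
    (horder : ∀ k ≤ p, iteratedDeriv k (fun t => Ψ t - exp (t • X)) 0 = 0) {h : ℝ} (hh : 0 ≤ h) :
    ‖Ψ h - exp (h • X)‖ ≤ 2 * (R + ‖X‖ / 2) ^ (p + 1) * h ^ (p + 1) / (p + 1)! := by
  have hhalf : HasGeomDerivBound (‖X‖ / 2) fun t => exp ((-(1 / 2) * t) • X) := by
    convert (hasGeomDerivBound_exp_smul hX).comp_mul (-(1 / 2)) using 1
    norm_num [div_eq_inv_mul]
  have hw := hΦ.mul hhalf
  have hΨ := contDiff_of_neg_mul_eq hΦ.1 hΦu hfac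
  have hp : (p : WithTop ℕ∞) ≤ ∞ := by exact_mod_cast le_top
  have hvanish : ∀ k ≤ p, iteratedDeriv k (fun t => Φ t * exp ((-(1 / 2) * t) • X) -
      Φ (-t) * exp ((-(1 / 2) * -t) • X)) 0 = 0 := by
    simp_rw [sub_comp_neg_eq_mul_sub_exp_mul hfac X]
    refine iteratedDeriv_mul_eq_zero_of_left (((hΦ.1.comp contDiff_neg).mul
      (hΨ.sub (contDiff_exp_smul X))).of_le hp) (hhalf.1.of_le hp) ?_
    exact iteratedDeriv_mul_eq_zero_of_right ((hΦ.1.comp contDiff_neg).of_le hp)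
      ((hΨ.sub (contDiff_exp_smul X)).of_le hp) horder
  calc ‖Ψ h - exp (h • X)‖
      = ‖Φ h * exp ((-(1 / 2) * h) • X) - Φ (-h) * exp ((-(1 / 2) * -h) • X)‖ := by
        rw [sub_comp_neg_eq_mul_sub_exp_mul hfac X, CStarRing.norm_mul_mem_unitary _
          (exp_smul_mem_unitary_s16 hX _), CStarRing.norm_mem_unitary_mul _ (hΦu _)]
    _ ≤ _ := norm_le_of_iteratedDeriv_eq_zero ((hw.1.sub (hw.1.comp contDiff_neg)).of_le
        (by exact_mod_cast le_top)) hvanish (hw.norm_iteratedDeriv_sub_comp_neg_le (p + 1)) hh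

end CStarRing

section LieTrotter

variable {E : Type*} [NormedRing E] [NormedAlgebra ℝ E] [CompleteSpace E] {N : ℕ} (A : Fin N → E)

theorem prod_ofFn_exp_neg_smul_mul_reverse_prod (u : ℝ) :
    (List.ofFn fun i => exp ((-u) • A i)).prod * (List.ofFn fun i => exp (u • A i)).reverse.prod
      = 1 := by
  simp only [List.ofFn_eq_map]
  exact List.prod_map_mul_reverse_prod_map_eq_one _ fun i => by
    rw [exp_smul_mul_exp_smul, neg_add_cancel, zero_smul, exp_zero]

theorem reverse_prod_ofFn_exp_neg_smul_mul_prod (u : ℝ) :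
    (List.ofFn fun i => exp ((-u) • A i)).reverse.prod * (List.ofFn fun i => exp (u • A i)).prod
      = 1 := by
  simp only [List.ofFn_eq_map]
  exact List.reverse_prod_map_mul_prod_map_eq_one _ fun i => by
    rw [exp_smul_mul_exp_smul, neg_add_cancel, zero_smul, exp_zero]

variable [StarRing E] [CStarRing E] [StarModule ℝ E] {A}

theorem hasGeomDerivBound_prod_ofFn_exp_smul (hA : ∀ i, star (A i) = -A i) :
    HasGeomDerivBound (∑ i, ‖A i‖) fun t : ℝ => (List.ofFn fun i => exp (t • A i)).prod := by
  rw [Fin.sum_univ_def]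
  simpa only [List.ofFn_eq_map] using
    HasGeomDerivBound.list_prod (List.finRange N) fun i _ => hasGeomDerivBound_exp_smul (hA i)

theorem hasGeomDerivBound_reverse_prod_ofFn_exp_smul (hA : ∀ i, star (A i) = -A i) :
    HasGeomDerivBound (∑ i, ‖A i‖) fun t : ℝ =>
      (List.ofFn fun i => exp (t • A i)).reverse.prod := by
  have h := HasGeomDerivBound.list_prod (List.finRange N).reverse
    fun i _ => hasGeomDerivBound_exp_smul (hA i)
  rw [List.map_reverse, List.sum_reverse, ← Fin.sum_univ_def] at h
  simpa only [List.ofFn_eq_map, List.map_reverse] using h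

theorem prod_ofFn_exp_smul_mem_unitary (hA : ∀ i, star (A i) = -A i) (t : ℝ) :
    (List.ofFn fun i => exp (t • A i)).prod ∈ unitary E :=
  Submonoid.list_prod_mem _ fun x hx => by
    obtain ⟨i, rfl⟩ := List.mem_ofFn.mp hx
    exact exp_smul_mem_unitary_s16 (hA i) t

theorem reverse_prod_ofFn_exp_smul_mem_unitary (hA : ∀ i, star (A i) = -A i) (t : ℝ) :
    (List.ofFn fun i => exp (t • A i)).reverse.prod ∈ unitary E :=
  Submonoid.list_prod_mem _ fun x hx => by
    obtain ⟨i, rfl⟩ := List.mem_ofFn.mp (List.mem_reverse.mp hx)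
    exact exp_smul_mem_unitary_s16 (hA i) t

end LieTrotter

section Composition

variable {M : Type*} [Monoid M] {χ χs : ℝ → M} {α : ℕ → ℝ}

def compositionStage (χ χs : ℝ → M) (α : ℕ → ℝ) (j : ℕ) (t : ℝ) : M :=
  if Odd j then χs (α j * t) else χ (α j * t)

theorem reverse_prod_ofFn_eq_descProd_compositionStage (s : ℕ) (t : ℝ) :
    (List.ofFn fun k : Fin s => χ (α (2 * k + 2) * t) * χs (α (2 * k + 1) * t)).reverse.prod =
      descProd (compositionStage χ χs α · t) (2 * s) := by
  rw [← reverse_prod_ofFn_pairs_eq_descProd]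
  simp [compositionStage, Nat.odd_add_one, parity_simps]

theorem compositionStage_neg_mul_compositionStage_reflect (hχ : ∀ u, χ (-u) * χs u = 1)
    (hχs : ∀ u, χs (-u) * χ u = 1) {s : ℕ}
    (hpal : ∀ j ∈ Finset.Icc 1 (2 * s), α (2 * s + 1 - j) = α j) {j : ℕ}
    (hj : j ∈ Finset.Icc 1 (2 * s)) (t : ℝ) :
    compositionStage χ χs α j (-t) * compositionStage χ χs α (2 * s + 1 - j) t = 1 := by
  have hodd : Odd (2 * s + 1 - j) ↔ ¬Odd j := by
    rw [Finset.mem_Icc] at hj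
    rw [Nat.odd_sub (by omega)]
    simp [parity_simps]
  by_cases h : Odd j <;> simp [compositionStage, h, hodd, hpal j hj, hχ, hχs]

theorem descProd_compositionStage_neg_mul_reverse_prod (hχ : ∀ u, χ (-u) * χs u = 1)
    (hχs : ∀ u, χs (-u) * χ u = 1) {s : ℕ}
    (hpal : ∀ j ∈ Finset.Icc 1 (2 * s), α (2 * s + 1 - j) = α j) (t : ℝ) :
    descProd (compositionStage χ χs α · (-t)) s *
        (List.ofFn fun k : Fin s => χ (α (2 * k + 2) * t) * χs (α (2 * k + 1) * t)).reverse.prod =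
      descProd (compositionStage χ χs α · t) s := by
  rw [reverse_prod_ofFn_eq_descProd_compositionStage, two_mul, descProd_add, ← mul_assoc,
    descProd_mul_descProd_eq_one, one_mul]
  intro j hj
  rw [Finset.mem_Icc] at hj
  rw [show s + 1 - j + s = 2 * s + 1 - j by omega]
  exact compositionStage_neg_mul_compositionStage_reflect hχ hχs hpal
    (Finset.mem_Icc.mpr ⟨hj.1, by omega⟩) t

theorem compositionStage_mem {S : Submonoid M} (hχ : ∀ t, χ t ∈ S) (hχs : ∀ t, χs t ∈ S)
    (j : ℕ) (t : ℝ) : compositionStage χ χs α j t ∈ S := by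
  unfold compositionStage
  split_ifs
  exacts [hχs _, hχ _]

theorem HasGeomDerivBound.compositionStage {F : Type*} [NormedAddCommGroup F] [NormedSpace ℝ F]
    {χ χs : ℝ → F} {S : ℝ} (hχ : HasGeomDerivBound S χ) (hχs : HasGeomDerivBound S χs) (j : ℕ) :
    HasGeomDerivBound (|α j| * S) (compositionStage χ χs α j) := by
  by_cases h : Odd j
  · rw [show _root_.compositionStage χ χs α j = fun t => χs (α j * t) from funext fun t => if_pos h]
    exact hχs.comp_mul (α j)
  · rw [show _root_.compositionStage χ χs α j = fun t => χ (α j * t) from funext fun t => if_neg h]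
    exact hχ.comp_mul (α j)

end Composition

section PalindromicComposition

variable {E : Type*} [NormedRing E] [NormedAlgebra ℝ E] [CompleteSpace E] [StarRing E]
  [CStarRing E] [StarModule ℝ E]

theorem norm_palindromic_composition_sub_exp_le {χ χs Ψ : ℝ → E} {α : ℕ → ℝ} {X : E} {S : ℝ}
    {s p : ℕ} (hχ : HasGeomDerivBound S χ) (hχs : HasGeomDerivBound S χs)
    (hχu : ∀ t, χ t ∈ unitary E) (hχsu : ∀ t, χs t ∈ unitary E)
    (hinv : ∀ u, χ (-u) * χs u = 1) (hinv' : ∀ u, χs (-u) * χ u = 1)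
    (hpal : ∀ j ∈ Finset.Icc 1 (2 * s), α (2 * s + 1 - j) = α j)
    (hΨ : ∀ t, Ψ t =
      (List.ofFn fun k : Fin s => χ (α (2 * k + 2) * t) * χs (α (2 * k + 1) * t)).reverse.prod)
    (hX : star X = -X) (horder : ∀ k ≤ p, iteratedDeriv k (fun t => Ψ t - exp (t • X)) 0 = 0)
    {h : ℝ} (hh : 0 ≤ h) :
    ‖Ψ h - exp (h • X)‖ ≤
      2 * ((∑ j ∈ Finset.Icc 1 s, |α j|) * S + ‖X‖ / 2) ^ (p + 1) * h ^ (p + 1) / (p + 1)! := by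
  have hΦ := HasGeomDerivBound.descProd (fun j => hχ.compositionStage hχs (α := α) j) s
  rw [← Finset.sum_mul] at hΦ
  refine norm_sub_exp_le_of_neg_mul_eq hX hΦ
    (fun t => descProd_mem (fun j => compositionStage_mem hχu hχsu j t) s) (fun t => ?_) horder hh
  rw [hΨ]
  exact descProd_compositionStage_neg_mul_reverse_prod hinv hinv' hpal t

end PalindromicComposition

theorem palindromic_composition_local_error_bound_general {n N s p : ℕ}
    (A : Fin N → Matrix (Fin n) (Fin n) ℂ)
    (a : Fin N → ℝ) (ha : ∀ i, ‖A i‖ = a i)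
    (hskew : ∀ i, (A i)ᴴ = -(A i))
    (α : ℕ → ℝ)
    (hpal : ∀ j ∈ Finset.Icc 1 (2 * s), α (2 * s + 1 - j) = α j)
    (χ χs Ψ : ℝ → Matrix (Fin n) (Fin n) ℂ)
    (hχ : ∀ t : ℝ, χ t = (List.ofFn fun i : Fin N => exp (t • A i)).prod)
    (hχs : ∀ t : ℝ, χs t = (List.ofFn fun i : Fin N => exp (t • A i)).reverse.prod)
    (hΨ : ∀ h : ℝ, Ψ h =
      (List.ofFn fun k : Fin s =>
        χ (α (2 * (k : ℕ) + 2) * h) * χs (α (2 * (k : ℕ) + 1) * h)).reverse.prod)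
    (horder : ∀ k ≤ p,
      iteratedDeriv k (fun h : ℝ => Ψ h - exp (h • ∑ i, A i)) 0 = 0) :
    ∀ h : ℝ, 0 ≤ h →
      ‖Ψ h - exp (h • ∑ i, A i)‖ ≤
        (1 / 2 ^ p : ℝ) / (p + 1).factorial *
          (1 + 2 * ∑ i ∈ Finset.Icc 1 s, |α i|) ^ (p + 1) *
            (h * ∑ j, a j) ^ (p + 1) := by
  intro h hh
  have hS : ∑ i, ‖A i‖ = ∑ j, a j := Finset.sum_congr rfl fun i _ => ha i
  have hχb : HasGeomDerivBound (∑ j, a j) χ := by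
    rw [funext hχ, ← hS]; exact hasGeomDerivBound_prod_ofFn_exp_smul hskew
  have hχsb : HasGeomDerivBound (∑ j, a j) χs := by
    rw [funext hχs, ← hS]; exact hasGeomDerivBound_reverse_prod_ofFn_exp_smul hskew
  have hX : star (∑ i, A i) = -∑ i, A i := by
    rw [star_sum, ← Finset.sum_neg_distrib]
    exact Finset.sum_congr rfl fun i _ => hskew i
  have hXS : ‖∑ i, A i‖ ≤ ∑ j, a j := hS ▸ norm_sum_le _ _
  calc ‖Ψ h - exp (h • ∑ i, A i)‖
      ≤ 2 * ((∑ i ∈ Finset.Icc 1 s, |α i|) * ∑ j, a j + ‖∑ i, A i‖ / 2) ^ (p + 1) * h ^ (p + 1)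
          / (p + 1)! :=
        norm_palindromic_composition_sub_exp_le hχb hχsb
          (fun t => hχ t ▸ prod_ofFn_exp_smul_mem_unitary hskew t)
          (fun t => hχs t ▸ reverse_prod_ofFn_exp_smul_mem_unitary hskew t)
          (fun u => by rw [hχ, hχs]; exact prod_ofFn_exp_neg_smul_mul_reverse_prod A u)
          (fun u => by rw [hχ, hχs]; exact reverse_prod_ofFn_exp_neg_smul_mul_prod A u)
          hpal hΨ hX horder hh
    _ ≤ 2 * ((1 + 2 * ∑ i ∈ Finset.Icc 1 s, |α i|) * (∑ j, a j) / 2) ^ (p + 1) * h ^ (p + 1)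
          / (p + 1)! := by
      gcongr
      · exact add_nonneg (mul_nonneg (by positivity) hχb.nonneg) (by positivity)
      · linarith
    _ = _ := by
      rw [div_pow, mul_pow, mul_pow, pow_succ 2 p]
      field_simp

/-- Improved local error bound for time-symmetric (palindromic)
compositions of the Lie–Trotter scheme and its adjoint, of even order p. -/
theorem palindromic_composition_local_error_bound {n N s p : ℕ}
    (A : Fin N → Matrix (Fin n) (Fin n) ℂ)
    (a : Fin N → ℝ) (ha : ∀ i, ‖A i‖ = a i)
    (hskew : ∀ i, (A i)ᴴ = -(A i))
    (α : ℕ → ℝ)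
    (hpal : ∀ j ∈ Finset.Icc 1 (2 * s), α (2 * s + 1 - j) = α j)
    (χ χs Ψ : ℝ → Matrix (Fin n) (Fin n) ℂ)
    (hχ : ∀ t : ℝ, χ t = (List.ofFn fun i : Fin N => exp (t • A i)).prod)
    (hχs : ∀ t : ℝ, χs t = (List.ofFn fun i : Fin N => exp (t • A i)).reverse.prod)
    (hΨ : ∀ h : ℝ, Ψ h =
      (List.ofFn fun k : Fin s =>
        χ (α (2 * (k : ℕ) + 2) * h) * χs (α (2 * (k : ℕ) + 1) * h)).reverse.prod)
    (hp : Even p)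
    (horder : ∀ k ≤ p,
      iteratedDeriv k (fun h : ℝ => Ψ h - exp (h • ∑ i, A i)) 0 = 0) :
    ∀ h : ℝ, 0 ≤ h →
      ‖Ψ h - exp (h • ∑ i, A i)‖ ≤
        (1 / 2 ^ p : ℝ) / (p + 1).factorial *
          (1 + 2 * ∑ i ∈ Finset.Icc 1 s, |α i|) ^ (p + 1) *
            (h * ∑ j, a j) ^ (p + 1) :=
  palindromic_composition_local_error_bound_general A a ha hskew α hpal χ χs Ψ hχ hχs hΨ horder
end
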